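/- For X₁, X₂, X₃ > 0 with X₁X₂X₃ = 1, parametrized as X_i = e^{(1/2) a_i·φ} with a₁ = (√2, 2/√6), a₂ = (−√2, 2/√6), a₃ = (0, −4/√6) and φ ∈ ℝ², the superpotential Ŵ = √2 g (X₁ + X₂ + X₃) satisfies (∂Ŵ/∂φ₁)² + (∂Ŵ/∂φ₂)² − (2/3) Ŵ² = −4g² (X₁⁻¹ + X₂⁻¹ + X₃⁻¹). -/

import Mathlib

/-!
Each `Xᵢ = exp (aᵢ·φ / 2)`, so `∂Ŵ/∂φ = √2 g Σᵢ (aᵢ / 2) Xᵢ`. Squaring brings in the Gram matrix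
`aᵢ·aⱼ` (`8/3` on the diagonal, `-4/3` off it): the `Xᵢ²` terms cancel against `-(2/3) Ŵ²`, leaving
`-4 g² (X₁X₂ + X₂X₃ + X₃X₁)`, and `Xᵢ Xⱼ = Xₖ⁻¹` because `a₁ + a₂ + a₃ = 0`.
-/

noncomputable section

/-- `X₁ = e^{(1/2) a₁·φ}` with `a₁ = (√2, 2/√6)`. -/
def X1 (φ₁ φ₂ : ℝ) : ℝ :=
  Real.exp ((1 / 2) * (Real.sqrt 2 * φ₁ + (2 / Real.sqrt 6) * φ₂))

/-- `X₂ = e^{(1/2) a₂·φ}` with `a₂ = (−√2, 2/√6)`. -/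
def X2 (φ₁ φ₂ : ℝ) : ℝ :=
  Real.exp ((1 / 2) * (-Real.sqrt 2 * φ₁ + (2 / Real.sqrt 6) * φ₂))

/-- `X₃ = e^{(1/2) a₃·φ}` with `a₃ = (0, −4/√6)`. -/
def X3 (φ₁ φ₂ : ℝ) : ℝ :=
  Real.exp ((1 / 2) * (-(4 / Real.sqrt 6) * φ₂))

/-- The superpotential `Ŵ = √2 g (X₁ + X₂ + X₃)`. -/
def What (g φ₁ φ₂ : ℝ) : ℝ :=
  Real.sqrt 2 * g * (X1 φ₁ φ₂ + X2 φ₁ φ₂ + X3 φ₁ φ₂)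

theorem HasDerivAt.exp_const_mul {f : ℝ → ℝ} {f' x : ℝ} (c : ℝ) (hf : HasDerivAt f f' x) :
    HasDerivAt (fun t => Real.exp (c * f t)) (c * f' * Real.exp (c * f x)) x :=
  (hf.const_mul c).exp.congr_deriv (mul_comm _ _)

theorem X1_mul_X2_mul_X3 (φ₁ φ₂ : ℝ) : X1 φ₁ φ₂ * X2 φ₁ φ₂ * X3 φ₁ φ₂ = 1 := by
  simp only [X1, X2, X3, ← Real.exp_add, Real.exp_eq_one_iff]
  ring

theorem hasDerivAt_What_fst (g φ₁ φ₂ : ℝ) :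
    HasDerivAt (fun t => What g t φ₂)
      (Real.sqrt 2 * g * (Real.sqrt 2 / 2 * X1 φ₁ φ₂ - Real.sqrt 2 / 2 * X2 φ₁ φ₂)) φ₁ := by
  have h1 : HasDerivAt (fun t => X1 t φ₂) (1 / 2 * (Real.sqrt 2 * 1) * X1 φ₁ φ₂) φ₁ :=
    (((hasDerivAt_id' φ₁).const_mul _).add_const _).exp_const_mul _
  have h2 : HasDerivAt (fun t => X2 t φ₂) (1 / 2 * (-Real.sqrt 2 * 1) * X2 φ₁ φ₂) φ₁ :=
    (((hasDerivAt_id' φ₁).const_mul _).add_const _).exp_const_mul _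
  have h3 : HasDerivAt (fun t => X3 t φ₂) 0 φ₁ := hasDerivAt_const _ _
  exact (((h1.add h2).add h3).const_mul _).congr_deriv (by ring)

theorem hasDerivAt_What_snd (g φ₁ φ₂ : ℝ) :
    HasDerivAt (fun t => What g φ₁ t)
      (Real.sqrt 2 * g * ((X1 φ₁ φ₂ + X2 φ₁ φ₂ - 2 * X3 φ₁ φ₂) / Real.sqrt 6)) φ₂ := by
  have h1 : HasDerivAt (fun t => X1 φ₁ t) (1 / 2 * (2 / Real.sqrt 6 * 1) * X1 φ₁ φ₂) φ₂ :=
    (((hasDerivAt_id' φ₂).const_mul _).const_add _).exp_const_mul _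
  have h2 : HasDerivAt (fun t => X2 φ₁ t) (1 / 2 * (2 / Real.sqrt 6 * 1) * X2 φ₁ φ₂) φ₂ :=
    (((hasDerivAt_id' φ₂).const_mul _).const_add _).exp_const_mul _
  have h3 : HasDerivAt (fun t => X3 φ₁ t) (1 / 2 * (-(4 / Real.sqrt 6) * 1) * X3 φ₁ φ₂) φ₂ :=
    ((hasDerivAt_id' φ₂).const_mul _).exp_const_mul _
  exact (((h1.add h2).add h3).const_mul _).congr_deriv (by ring)

theorem stu_potential_eq_of_mul_eq_one (g A B C : ℝ) (hABC : A * B * C = 1) :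
    (Real.sqrt 2 * g * (Real.sqrt 2 / 2 * A - Real.sqrt 2 / 2 * B)) ^ 2
        + (Real.sqrt 2 * g * ((A + B - 2 * C) / Real.sqrt 6)) ^ 2
        - 2 / 3 * (Real.sqrt 2 * g * (A + B + C)) ^ 2
      = -4 * g ^ 2 * (A⁻¹ + B⁻¹ + C⁻¹) := by
  have hA : A⁻¹ = B * C := inv_eq_of_mul_eq_one_right (by linear_combination hABC)
  have hB : B⁻¹ = A * C := inv_eq_of_mul_eq_one_right (by linear_combination hABC)
  have hC : C⁻¹ = A * B := inv_eq_of_mul_eq_one_right (by linear_combination hABC)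
  have h2 : Real.sqrt 2 ^ 2 = 2 := Real.sq_sqrt (by norm_num)
  have h6 : Real.sqrt 6 ^ 2 = 6 := Real.sq_sqrt (by norm_num)
  rw [hA, hB, hC]
  field_simp
  rw [h2, h6]
  ring

/-- the STU-model superpotential identity
`(∂Ŵ/∂φ₁)² + (∂Ŵ/∂φ₂)² − (2/3) Ŵ² = −4g² (X₁⁻¹ + X₂⁻¹ + X₃⁻¹)`
(so that it reproduces the scalar potential `V̂ = −4g² Σᵢ Xᵢ⁻¹`). -/
theorem stu_superpotential_identity (g φ₁ φ₂ : ℝ) :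
    (deriv (fun t => What g t φ₂) φ₁) ^ 2 + (deriv (fun t => What g φ₁ t) φ₂) ^ 2
        - (2 / 3) * (What g φ₁ φ₂) ^ 2
      = -4 * g ^ 2 * ((X1 φ₁ φ₂)⁻¹ + (X2 φ₁ φ₂)⁻¹ + (X3 φ₁ φ₂)⁻¹) := by
  rw [(hasDerivAt_What_fst g φ₁ φ₂).deriv, (hasDerivAt_What_snd g φ₁ φ₂).deriv, What]
  exact stu_potential_eq_of_mul_eq_one g _ _ _ (X1_mul_X2_mul_X3 φ₁ φ₂)
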